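/- Let k be a finite field of cardinality q^n, let F ⊆ k[X] be finite, and set E = F̄_f ⊆ S. Let h_2 ∈ k[X] with deg(h_2) = d > 0, let u = (q−1)⌈log_q(d) + 1⌉ + 1, and assume overline{h_2} ∈ V_{E,u}. For e ∈ ℕ let r_e = X^e mod h_2 be the remainder of division of X^e by h_2. Then for every e ∈ ℕ, overline{X^e} − overline{r_e} ∈ V_{E, max{w(e), u}}; in particular, if w(e) ≤ u then overline{X^e} − overline{r_e} ∈ V_{E,u}. -/

import Mathlib

open MvPolynomial

/-- `V_{E,d}`: the smallest `k`-subspace of the polynomial ring containing every `f ∈ E`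
of total degree at most `d` and closed under multiplication by ring elements
as long as the degree stays at most `d`. -/
noncomputable def Vspace {k : Type*} [Field k] {σ : Type*} (E : Finset (MvPolynomial σ k)) (d : ℕ) :
    Submodule k (MvPolynomial σ k) :=
  sInf {W | (∀ f ∈ E, f.totalDegree ≤ d → f ∈ W) ∧
            ∀ g ∈ W, ∀ h : MvPolynomial σ k, (g * h).totalDegree ≤ d → g * h ∈ W}

/-- The reduced exponent `e'` determined by `X^{e'} = X^e mod (X^{q^n} - X)`:
`e' = e` if `e < q^n`, and otherwise `e'` is the representative of `e` modulo `q^n - 1`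
lying in `{1, …, q^n - 1}`. -/
def reduceExp (q n e : ℕ) : ℕ :=
  if e < q ^ n then e
  else if (q ^ n - 1) ∣ e then q ^ n - 1 else e % (q ^ n - 1)

/-- The exponent vector of `overline{X^e}`: the base-`q` digits of the reduced exponent. -/
noncomputable def expVec (q n e : ℕ) : Fin n →₀ ℕ :=
  Finsupp.equivFunOnFinite.symm fun j : Fin n => reduceExp q n e / q ^ (j : ℕ) % q

/-- The fake Weil descent map `f ↦ f̄` from `k[X]` to `k[X_0, …, X_{n-1}]`, the `k`-linear
extension of `X^e ↦ overline{X^e} = X_0^{e'_0} ⋯ X_{n-1}^{e'_{n-1}}`. -/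
noncomputable def fakeWeil {k : Type*} [Field k] (q n : ℕ) (f : Polynomial k) :
    MvPolynomial (Fin n) k :=
  f.sum fun e c => MvPolynomial.monomial (expVec q n e) c

/-- The fake Weil descent system `F̄_f` of a finite set `F ⊆ k[X]`:
`{f̄ : f ∈ F} ∪ {X_0^q - X_1, …, X_{n-2}^q - X_{n-1}, X_{n-1}^q - X_0}`. -/
noncomputable def fakeWeilSystem {k : Type*} [Field k] [DecidableEq k] (q n : ℕ) [NeZero n]
    (F : Finset (Polynomial k)) : Finset (MvPolynomial (Fin n) k) :=
  F.image (fakeWeil q n) ∪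
    Finset.image (fun i : Fin n => X i ^ q - X (i + 1)) Finset.univ

/-- The weight of a natural number: its digit sum in base `q`. -/
def wNat (q e : ℕ) : ℕ := (Nat.digits q e).sum

/-- The weight of a univariate polynomial: the maximal weight of an exponent appearing in it. -/
def wPoly {k : Type*} [Field k] (q : ℕ) (f : Polynomial k) : ℕ :=
  f.support.sup fun e => wNat q e

/-!
Strong induction on `e`. For `e < d` the difference vanishes and for `e = d` it is a multiple
of `overline{h_2}`. For `e > d` write `e = f + s`. Since `X^e ≡ r_f X^s (mod h_2)`, the difference
for `e` is the difference for `f` times `overline{X^s}`, plus the differences for the exponents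
`a + s` with `a < d`, plus terms `overline{X^a} overline{X^b} - overline{X^{a+b}}`; the field
equations `X_j^q - X_{j+1}` reduce the latter inside `V_{E, w(a) + w(b)}`, as the weight
`w(e)` bounds the degree of `overline{X^e}`. Every weight involved stays below `max(w(e), u)`
for a suitable `s` because `d ≤ q^{⌈log_q d⌉}` forces `w(a) ≤ (q-1)⌈log_q d⌉` for `a < d`.
-/

section WNat

variable {q : ℕ}

@[simp] lemma wNat_zero : wNat q 0 = 0 := by simp [wNat]

lemma wNat_eq_mod_add_wNat_div (hq : 1 < q) (x : ℕ) : wNat q x = x % q + wNat q (x / q) := by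
  rcases eq_or_ne x 0 with rfl | hx
  · simp
  · rw [wNat, Nat.digits_eq_cons_digits_div hq hx, List.sum_cons, wNat]

lemma wNat_of_lt {x : ℕ} (hx : x < q) : wNat q x = x := by
  rcases eq_or_ne x 0 with rfl | hx0
  · simp
  · simp [wNat, Nat.digits_of_lt q x hx0 hx]

lemma wNat_add_mul_pow (hq : 1 < q) {l j : ℕ} (hl : l < q ^ j) (a : ℕ) :
    wNat q (l + q ^ j * a) = wNat q l + wNat q a := by
  rcases eq_or_ne a 0 with rfl | ha
  · simp
  have hlen : (Nat.digits q l).length ≤ j := (Nat.digits_length_le_iff hq l).2 hl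
  have := Nat.digits_append_zeroes_append_digits (k := j - (Nat.digits q l).length) (n := l) hq
    (Nat.pos_of_ne_zero ha)
  rw [Nat.add_sub_cancel' hlen] at this
  simp [wNat, ← this]

lemma wNat_pow (hq : 1 < q) (j : ℕ) : wNat q (q ^ j) = 1 := by
  simpa [wNat_of_lt hq] using wNat_add_mul_pow hq (pow_pos (by omega) j) 1

lemma wNat_le_of_lt_pow (hq : 1 < q) {x m : ℕ} (hx : x < q ^ m) : wNat q x ≤ (q - 1) * m := by
  have hlen : (Nat.digits q x).length ≤ m := (Nat.digits_length_le_iff hq x).2 hx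
  calc wNat q x ≤ (Nat.digits q x).length • (q - 1) :=
        List.sum_le_card_nsmul _ _ fun a ha => Nat.le_sub_one_of_lt (Nat.digits_lt_base hq ha)
    _ ≤ (q - 1) * m := by rw [smul_eq_mul, mul_comm]; exact Nat.mul_le_mul_left _ hlen

lemma sub_one_mul_sum_div_pow_eq_sub_wNat (hq : 1 < q) {x N : ℕ} (hN : Nat.log q x < N) :
    (q - 1) * ∑ i ∈ Finset.range N, x / q ^ (i + 1) = x - wNat q x := by
  rw [wNat, ← Nat.sub_one_mul_sum_log_div_pow_eq_sub_sum_digits,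
    ← Finset.sum_range_add_sum_Ico _ hN, Finset.sum_eq_zero (s := Finset.Ico _ _), add_zero]
  intro i hi
  exact Nat.div_eq_of_lt ((Nat.lt_pow_succ_log_self hq x).trans_le
    (Nat.pow_le_pow_right (by omega) (by simp at hi; omega)))

/-- By Legendre's formula `x - w(x) = (q - 1) Σ_{i ≥ 1} ⌊x / q^i⌋` and superadditivity of
`⌊· / q^i⌋`. -/
lemma wNat_add_le (hq : 1 < q) (a b : ℕ) : wNat q (a + b) ≤ wNat q a + wNat q b := by
  have hlog : ∀ x ≤ a + b, Nat.log q x < a + b + 1 := fun x hx =>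
    Nat.lt_succ_of_le ((Nat.log_le_self q x).trans hx)
  have hsum : ∑ i ∈ Finset.range (a + b + 1), (a / q ^ (i + 1) + b / q ^ (i + 1))
      ≤ ∑ i ∈ Finset.range (a + b + 1), (a + b) / q ^ (i + 1) :=
    Finset.sum_le_sum fun i _ => Nat.div_add_div_le_add_div
  rw [Finset.sum_add_distrib] at hsum
  have key := Nat.mul_le_mul_left (q - 1) hsum
  rw [mul_add, sub_one_mul_sum_div_pow_eq_sub_wNat hq (hlog a (by omega)),
    sub_one_mul_sum_div_pow_eq_sub_wNat hq (hlog b (by omega)),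
    sub_one_mul_sum_div_pow_eq_sub_wNat hq (hlog _ le_rfl)] at key
  have := Nat.digit_sum_le q a
  have := Nat.digit_sum_le q b
  have := Nat.digit_sum_le q (a + b)
  simp only [wNat] at key ⊢
  omega

lemma wNat_sub_pow_log_add_one (hq : 1 < q) {e : ℕ} (he : e ≠ 0) :
    wNat q (e - q ^ Nat.log q e) + 1 = wNat q e := by
  have hQ : 0 < q ^ Nat.log q e := pow_pos (by omega) _
  have ha0 : 0 < e / q ^ Nat.log q e := Nat.div_pos (Nat.pow_log_le_self q he) hQ
  have haq : e / q ^ Nat.log q e < q :=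
    Nat.div_lt_of_lt_mul (by rw [← pow_succ]; exact Nat.lt_pow_succ_log_self hq e)
  have hL := Nat.mod_lt e hQ
  generalize Nat.log q e = T at *
  rw [← Nat.mod_add_div e (q ^ T)]
  generalize e % q ^ T = L, e / q ^ T = a at *
  obtain ⟨a, rfl⟩ := Nat.exists_eq_add_one.2 ha0
  rw [mul_add_one, ← add_assoc, Nat.add_sub_cancel, add_assoc, wNat_add_mul_pow hq hL,
    ← mul_add_one, wNat_add_mul_pow hq hL, wNat_of_lt (x := a) (by omega), wNat_of_lt haq,
    add_assoc]

/-- `s` is `1` for `e < q^{c+1}`, otherwise the leading power `q^T` of `e`, or `(q-1) q^{T-1}`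
if removing `q^T` from `e` leaves less than `d`. -/
lemma exists_wNat_split (hq : 1 < q) {c d e : ℕ} (hd : d ≤ q ^ c) (hde : d < e) :
    ∃ s, 0 < s ∧ s + d ≤ e ∧
      wNat q (e - s) + wNat q s ≤ max (wNat q e) ((q - 1) * (c + 1) + 1) ∧ wNat q s ≤ q := by
  have hu : (q - 1) * (c + 1) + 1 = (q - 1) * c + q := by
    rw [mul_add, mul_one]; omega
  rcases lt_or_ge e (q ^ (c + 1)) with he | he
  · refine ⟨1, one_pos, by omega, ?_, by rw [wNat_of_lt hq]; omega⟩
    have := wNat_le_of_lt_pow hq (x := e - 1) (m := c + 1) (by omega)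
    rw [wNat_of_lt hq]
    omega
  have he0 : e ≠ 0 := by omega
  obtain ⟨t, ht⟩ : ∃ t, Nat.log q e = t + 1 :=
    Nat.exists_eq_add_one.2 (Nat.log_pos_iff.2 ⟨(Nat.le_self_pow (by omega) q).trans he, hq⟩)
  have hct : c ≤ t := by
    have := Nat.le_log_of_pow_le hq he
    omega
  have hTe : q ^ (t + 1) ≤ e := ht ▸ Nat.pow_log_le_self q he0
  have hdt : d ≤ q ^ t := hd.trans (Nat.pow_le_pow_right (by omega) hct)
  have hpow : q ^ (t + 1) = q ^ t + q ^ t * (q - 1) := by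
    rw [pow_succ, Nat.mul_sub, mul_one]
    have := Nat.le_mul_of_pos_right (q ^ t) (show 0 < q by omega)
    omega
  rcases le_or_gt d (e - q ^ (t + 1)) with hbig | hsmall
  · refine ⟨q ^ (t + 1), pow_pos (by omega) _, by omega, ?_, by rw [wNat_pow hq]; omega⟩
    have := wNat_sub_pow_log_add_one hq he0
    rw [ht] at this
    rw [wNat_pow hq]
    omega
  · have hws : wNat q (q ^ t * (q - 1)) = q - 1 := by
      simpa [wNat_of_lt (show q - 1 < q by omega)] using
        wNat_add_mul_pow hq (pow_pos (show 0 < q by omega) t) (q - 1)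
    refine ⟨q ^ t * (q - 1), Nat.mul_pos (pow_pos (by omega) t) (by omega), by omega, ?_,
      by omega⟩
    have hrest : e - q ^ t * (q - 1) = e - q ^ (t + 1) + q ^ t * 1 := by omega
    have hw := wNat_le_of_lt_pow hq (x := e - q ^ (t + 1)) (m := c) (by omega)
    rw [hrest, wNat_add_mul_pow hq (by omega), wNat_of_lt hq, hws]
    omega

end WNat

section ReduceExp

variable {q n : ℕ}

@[simp] lemma reduceExp_zero : reduceExp q n 0 = 0 := by
  unfold reduceExp
  split_ifs <;> simp_all

lemma reduceExp_of_ne_zero {e : ℕ} (he : e ≠ 0) :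
    reduceExp q n e = (e - 1) % (q ^ n - 1) + 1 := by
  unfold reduceExp
  generalize q ^ n = Q
  split_ifs with hlt hdvd
  · rw [Nat.mod_eq_of_lt (by omega)]; omega
  · obtain ⟨t, rfl⟩ := hdvd
    obtain ⟨t, rfl⟩ := Nat.exists_eq_add_one.2 (Nat.pos_of_ne_zero (right_ne_zero_of_mul he))
    have hm : Q - 1 ≠ 0 := left_ne_zero_of_mul he
    rw [mul_add_one, Nat.add_sub_assoc (by omega), Nat.mul_add_mod_self_left,
      Nat.mod_eq_of_lt (by omega)]
    omega
  · generalize Q - 1 = m at *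
    rcases eq_or_ne m 0 with rfl | hm
    · simp; omega
    have hr : e % m ≠ 0 := fun h => hdvd (Nat.dvd_of_mod_eq_zero h)
    have hsplit := Nat.mod_add_div e m
    have hrm := Nat.mod_lt e (Nat.pos_of_ne_zero hm)
    generalize e % m = r, e / m = t at *
    rw [← hsplit, show r + m * t - 1 = r - 1 + m * t by omega, Nat.add_mul_mod_self_left,
      Nat.mod_eq_of_lt (by omega)]
    omega

lemma reduceExp_of_lt {e : ℕ} (he : e < q ^ n) : reduceExp q n e = e := if_pos he

lemma reduceExp_eq_zero_iff {e : ℕ} : reduceExp q n e = 0 ↔ e = 0 := by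
  rcases eq_or_ne e 0 with rfl | he
  · simp
  · simp [reduceExp_of_ne_zero he, he]

lemma reduceExp_modEq (e : ℕ) : reduceExp q n e ≡ e [MOD q ^ n - 1] := by
  rcases eq_or_ne e 0 with rfl | he
  · simp [Nat.ModEq.refl]
  · rw [reduceExp_of_ne_zero he]
    conv_rhs => rw [← Nat.sub_add_cancel (Nat.one_le_iff_ne_zero.2 he)]
    exact (Nat.mod_modEq _ _).add_right 1

lemma reduceExp_congr {a b : ℕ} (ha : a ≠ 0) (hb : b ≠ 0) (h : a ≡ b [MOD q ^ n - 1]) :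
    reduceExp q n a = reduceExp q n b := by
  rw [reduceExp_of_ne_zero ha, reduceExp_of_ne_zero hb]
  congr 1
  refine Nat.ModEq.add_right_cancel' 1 ?_
  rwa [Nat.sub_add_cancel (Nat.one_le_iff_ne_zero.2 ha),
    Nat.sub_add_cancel (Nat.one_le_iff_ne_zero.2 hb)]

lemma reduceExp_lt (hQ : 1 < q ^ n) (e : ℕ) : reduceExp q n e < q ^ n := by
  rcases eq_or_ne e 0 with rfl | he
  · simpa using pos_of_gt hQ
  · rw [reduceExp_of_ne_zero he]
    have := Nat.mod_lt (e - 1) (show 0 < q ^ n - 1 by omega)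
    omega

lemma reduceExp_reduceExp_add (a b : ℕ) :
    reduceExp q n (reduceExp q n a + reduceExp q n b) = reduceExp q n (a + b) := by
  rcases eq_or_ne (a + b) 0 with hab | hab
  · obtain ⟨rfl, rfl⟩ : a = 0 ∧ b = 0 := by omega
    simp
  · refine reduceExp_congr ?_ hab ((reduceExp_modEq a).add (reduceExp_modEq b))
    rw [Ne, Nat.add_eq_zero_iff, reduceExp_eq_zero_iff, reduceExp_eq_zero_iff]
    omega

lemma pow_modEq_pow_mod (hq : 0 < q) (m : ℕ) : q ^ m ≡ q ^ (m % n) [MOD q ^ n - 1] := by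
  have h1 : q ^ n ≡ 1 [MOD q ^ n - 1] := Nat.modEq_sub (Nat.one_le_pow _ _ hq)
  conv_lhs => rw [← Nat.mod_add_div m n, pow_add, pow_mul]
  simpa using (Nat.ModEq.refl (q ^ (m % n))).mul (h1.pow (m / n))

lemma wNat_reduceExp_le (hq : 1 < q) (hn : n ≠ 0) (e : ℕ) :
    wNat q (reduceExp q n e) ≤ wNat q e := by
  induction e using Nat.strong_induction_on with
  | _ e ih =>
  rcases lt_or_ge e (q ^ n) with he | he
  · rw [reduceExp_of_lt he]
  have hQ : 1 < q ^ n := Nat.one_lt_pow hn hq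
  have hsplit := Nat.mod_add_div e (q ^ n)
  have ha : 0 < e / q ^ n := Nat.div_pos he (by omega)
  -- `e = L + q^n a` folds to the smaller `L + a`, in the same class modulo `q^n - 1`
  have hfold : reduceExp q n e = reduceExp q n (e % q ^ n + e / q ^ n) := by
    refine reduceExp_congr (by omega) (Nat.add_pos_right _ ha).ne' ?_
    conv_lhs => rw [← hsplit]
    exact Nat.ModEq.add_left _ (by simpa using ((Nat.modEq_sub hQ.le).mul_right (e / q ^ n)))
  have hlt : e % q ^ n + e / q ^ n < e := by
    have := Nat.mul_le_mul_right (e / q ^ n) (show 2 ≤ q ^ n from hQ)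
    omega
  calc wNat q (reduceExp q n e) ≤ wNat q (e % q ^ n + e / q ^ n) := hfold ▸ ih _ hlt
    _ ≤ wNat q (e % q ^ n) + wNat q (e / q ^ n) := wNat_add_le hq _ _
    _ = wNat q e := by
      conv_rhs => rw [← hsplit, wNat_add_mul_pow hq (Nat.mod_lt e (by omega))]

end ReduceExp

section Digits

variable {q n : ℕ}

lemma sum_div_pow_mod_mul_pow {x : ℕ} (hx : x < q ^ n) :
    ∑ j : Fin n, x / q ^ (j : ℕ) % q * q ^ (j : ℕ) = x := by
  have := congrArg Fin.val (finFunctionFinEquiv.apply_symm_apply (⟨x, hx⟩ : Fin (q ^ n)))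
  rwa [finFunctionFinEquiv_apply] at this

lemma sum_mul_pow_lt {b : Fin n → ℕ} (hb : ∀ j, b j < q) : ∑ i, b i * q ^ (i : ℕ) < q ^ n := by
  simpa [finFunctionFinEquiv_apply] using
    (finFunctionFinEquiv (fun i => (⟨b i, hb i⟩ : Fin q))).isLt

lemma sum_mul_pow_div_pow_mod {b : Fin n → ℕ} (hb : ∀ j, b j < q) (j : Fin n) :
    (∑ i, b i * q ^ (i : ℕ)) / q ^ (j : ℕ) % q = b j := by
  have := congrArg (fun f => (f j : ℕ))
    (finFunctionFinEquiv.symm_apply_apply fun i => (⟨b i, hb i⟩ : Fin q))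
  rwa [finFunctionFinEquiv_symm_apply_val, finFunctionFinEquiv_apply] at this

lemma sum_div_pow_mod (hq : 1 < q) {x : ℕ} (hx : x < q ^ n) :
    ∑ j : Fin n, x / q ^ (j : ℕ) % q = wNat q x := by
  induction n generalizing x with
  | zero => simp_all
  | succ n ih =>
    rw [Fin.sum_univ_succ, wNat_eq_mod_add_wNat_div hq x,
      ← ih (Nat.div_lt_of_lt_mul (by rwa [← pow_succ']))]
    simp [pow_succ', Nat.div_div_eq_div_mul]

end Digits

section ExpVec

variable {q n : ℕ}

lemma expVec_apply (e : ℕ) (j : Fin n) : expVec q n e j = reduceExp q n e / q ^ (j : ℕ) % q :=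
  rfl

lemma expVec_congr {a b : ℕ} (h : reduceExp q n a = reduceExp q n b) :
    expVec q n a = expVec q n b := by
  rw [expVec, h, expVec]

variable (q n) in
/-- The exponent `e` such that the monomial `X^b` of `S` is `overline{X^e}` modulo the field
equations. -/
noncomputable def monomialExp : (Fin n →₀ ℕ) →+ ℕ :=
  Finsupp.weight fun j : Fin n => q ^ (j : ℕ)

lemma monomialExp_apply (b : Fin n →₀ ℕ) : monomialExp q n b = ∑ j, b j * q ^ (j : ℕ) := by
  simp [monomialExp, Finsupp.weight_eq_sum]

lemma monomialExp_single (j : Fin n) (c : ℕ) :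
    monomialExp q n (Finsupp.single j c) = c * q ^ (j : ℕ) := by
  simp [monomialExp, Finsupp.weight_single]

lemma monomialExp_expVec (hQ : 1 < q ^ n) (e : ℕ) :
    monomialExp q n (expVec q n e) = reduceExp q n e := by
  simp only [monomialExp_apply, expVec_apply]
  exact sum_div_pow_mod_mul_pow (reduceExp_lt hQ e)

lemma expVec_monomialExp {b : Fin n →₀ ℕ} (hb : ∀ j, b j < q) :
    expVec q n (monomialExp q n b) = b := by
  ext j
  rw [expVec_apply, monomialExp_apply, reduceExp_of_lt (sum_mul_pow_lt hb),
    sum_mul_pow_div_pow_mod hb]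

lemma degree_expVec_le (hq : 1 < q) (hn : n ≠ 0) (e : ℕ) :
    (expVec q n e).degree ≤ wNat q e := by
  rw [Finsupp.degree_eq_sum]
  simp only [expVec_apply]
  rw [sum_div_pow_mod hq (reduceExp_lt (Nat.one_lt_pow hn hq) e)]
  exact wNat_reduceExp_le hq hn e

/-- For `j = n - 1` the index `j + 1` wraps around to `0`, consistently since
`q^n ≡ 1 (mod q^n - 1)`. -/
lemma expVec_add_pow_succ (hq : 0 < q) [NeZero n] (x : ℕ) (j : Fin n) :
    expVec q n (x + q ^ ((j : ℕ) + 1)) = expVec q n (x + q ^ ((j + 1 : Fin n) : ℕ)) := by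
  refine expVec_congr (reduceExp_congr (by positivity) (by positivity) (Nat.ModEq.add_left x ?_))
  rw [Fin.val_add, Fin.val_one', Nat.add_mod_mod]
  exact pow_modEq_pow_mod hq _

end ExpVec

section Vspace

variable {k σ : Type*} [Field k] {E : Finset (MvPolynomial σ k)} {d : ℕ}

lemma mem_Vspace_of_mem {f : MvPolynomial σ k} (hf : f ∈ E) (hdeg : f.totalDegree ≤ d) :
    f ∈ Vspace E d :=
  Submodule.mem_sInf.2 fun _ hW => hW.1 f hf hdeg

lemma mul_mem_Vspace {g : MvPolynomial σ k} (hg : g ∈ Vspace E d) (h : MvPolynomial σ k)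
    (hdeg : (g * h).totalDegree ≤ d) : g * h ∈ Vspace E d :=
  Submodule.mem_sInf.2 fun W hW => hW.2 g (Submodule.mem_sInf.1 hg W hW) h hdeg

lemma Vspace_mono {d' : ℕ} (h : d ≤ d') : Vspace E d ≤ Vspace E d' :=
  sInf_le_sInf fun _ ⟨h1, h2⟩ =>
    ⟨fun f hf hd => h1 f hf (hd.trans h), fun g hg p hd => h2 g hg p (hd.trans h)⟩

end Vspace

lemma MvPolynomial.totalDegree_monomial_le_degree {k σ : Type*} [CommSemiring k]
    (b : σ →₀ ℕ) (c : k) : (monomial b c).totalDegree ≤ b.degree :=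
  totalDegree_monomial_le b c

section FieldEquations

variable {k : Type*} [Field k] {q n : ℕ} [NeZero n] {E : Finset (MvPolynomial (Fin n) k)}

/-- Replace `X_j^q` by `X_{j+1}` while some exponent is at least `q`; each step lowers the
degree. -/
lemma monomial_sub_monomial_expVec_mem (hq : 1 < q)
    (hE : ∀ i : Fin n, X i ^ q - X (i + 1) ∈ E) (b : Fin n →₀ ℕ) :
    monomial b (1 : k) - monomial (expVec q n (monomialExp q n b)) 1 ∈ Vspace E b.degree := by
  induction hD : b.degree using Nat.strong_induction_on generalizing b with
  | _ D ih =>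
  subst hD
  by_cases hb : ∀ j, b j < q
  · rw [expVec_monomialExp hb, sub_self]
    exact zero_mem _
  push Not at hb
  obtain ⟨j, hj⟩ := hb
  obtain ⟨b₀, rfl⟩ : ∃ b₀, b = b₀ + Finsupp.single j q :=
    ⟨b - Finsupp.single j q, (tsub_add_cancel_of_le (Finsupp.single_le_iff.2 hj)).symm⟩
  set b' := b₀ + Finsupp.single (j + 1) 1
  have hdeg : (b₀ + Finsupp.single j q).degree = b₀.degree + q := by simp
  have hdeg' : b'.degree = b₀.degree + 1 := by simp [b']
  have hreduce : (X j ^ q - X (j + 1)) * monomial b₀ (1 : k)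
      = monomial (b₀ + Finsupp.single j q) 1 - monomial b' 1 := by
    rw [sub_mul, X_pow_eq_monomial, X, monomial_mul, monomial_mul, one_mul,
      add_comm (Finsupp.single j q), add_comm (Finsupp.single (j + 1) 1)]
  have hexp : expVec q n (monomialExp q n b') =
      expVec q n (monomialExp q n (b₀ + Finsupp.single j q)) := by
    simp only [b', map_add, monomialExp_single, one_mul]
    rw [← expVec_add_pow_succ (by omega), pow_succ']
  have hfield : X j ^ q - X (j + 1) ∈ Vspace E (b₀ + Finsupp.single j q).degree := by
    refine mem_Vspace_of_mem (hE j) ((totalDegree_sub _ _).trans ?_)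
    simp only [totalDegree_X_pow, totalDegree_X]
    omega
  have hstep := mul_mem_Vspace hfield (monomial b₀ 1) (by
    rw [hreduce, ← mem_restrictTotalDegree]
    refine sub_mem ?_ ?_ <;> rw [mem_restrictTotalDegree]
    · exact totalDegree_monomial_le_degree _ _
    · exact (totalDegree_monomial_le_degree _ _).trans (by omega))
  have hrest := Vspace_mono (show b'.degree ≤ (b₀ + Finsupp.single j q).degree by omega)
    (ih _ (by omega) b' rfl)
  rw [hreduce] at hstep
  rw [hexp] at hrest
  rw [← sub_add_sub_cancel _ (monomial b' 1)]
  exact add_mem hstep hrest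

lemma monomial_expVec_mul_sub_mem (hq : 1 < q)
    (hE : ∀ i : Fin n, X i ^ q - X (i + 1) ∈ E) (a b : ℕ) :
    monomial (expVec q n a) (1 : k) * monomial (expVec q n b) 1 - monomial (expVec q n (a + b)) 1
      ∈ Vspace E ((expVec q n a).degree + (expVec q n b).degree) := by
  have hQ : 1 < q ^ n := Nat.one_lt_pow (NeZero.ne n) hq
  rw [monomial_mul, one_mul, ← map_add,
    ← expVec_congr (reduceExp_reduceExp_add (q := q) (n := n) a b),
    ← monomialExp_expVec hQ, ← monomialExp_expVec hQ, ← map_add]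
  exact monomial_sub_monomial_expVec_mem hq hE _

end FieldEquations

lemma Polynomial.linearMap_mem_of_forall_mem_support {k M : Type*} [Field k] [AddCommGroup M]
    [Module k M] (L : Polynomial k →ₗ[k] M) (W : Submodule k M) {p : Polynomial k}
    (h : ∀ a ∈ p.support, L (Polynomial.X ^ a) ∈ W) : L p ∈ W := by
  rw [p.as_sum_support_C_mul_X_pow, map_sum]
  exact sum_mem fun a ha => by
    rw [← Polynomial.smul_eq_C_mul, map_smul]
    exact W.smul_mem _ (h a ha)

lemma Polynomial.lt_natDegree_of_mem_support_mod {k : Type*} [Field k] {h p : Polynomial k}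
    (hh : h ≠ 0) {a : ℕ} (ha : a ∈ (p % h).support) : a < h.natDegree := by
  have hlt : (p % h).degree < h.degree := EuclideanDomain.mod_lt p hh
  have := Polynomial.le_degree_of_mem_supp a ha
  rw [Polynomial.degree_eq_natDegree hh] at hlt
  exact_mod_cast this.trans_lt hlt

section Descent

variable {k : Type*} [Field k] (q n : ℕ)

noncomputable def fakeWeilₗ : Polynomial k →ₗ[k] MvPolynomial (Fin n) k :=
  Polynomial.lsum fun e => monomial (expVec q n e)

variable {q n}

lemma fakeWeilₗ_apply (p : Polynomial k) : fakeWeilₗ q n p = fakeWeil q n p := rfl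

lemma fakeWeil_X_pow (e : ℕ) :
    fakeWeil q n (Polynomial.X ^ e : Polynomial k) = monomial (expVec q n e) 1 := by
  rw [fakeWeil, Polynomial.X_pow_eq_monomial, Polynomial.sum_monomial_index _ _ (by simp)]

variable (q n) in
/-- `p ↦ p̄ - overline{p mod h}`; over a field `p % h` is `p %ₘ (h * C h.leadingCoeff⁻¹)`. -/
noncomputable def modDefect (h : Polynomial k) : Polynomial k →ₗ[k] MvPolynomial (Fin n) k :=
  fakeWeilₗ q n - fakeWeilₗ q n ∘ₗ Polynomial.modByMonicHom (h * Polynomial.C h.leadingCoeff⁻¹)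

lemma modDefect_apply (h p : Polynomial k) :
    modDefect q n h p = fakeWeil q n p - fakeWeil q n (p % h) := rfl

lemma modDefect_of_degree_lt {h p : Polynomial k} (hp : p.degree < h.degree) :
    modDefect q n h p = 0 := by
  have hh : h ≠ 0 := by rintro rfl; simp at hp
  rw [modDefect_apply, (Polynomial.mod_eq_self_iff hh).2 hp, sub_self]

lemma modDefect_X_pow_natDegree {h : Polynomial k} (hh : h ≠ 0) :
    modDefect q n h (Polynomial.X ^ h.natDegree) = h.leadingCoeff⁻¹ • fakeWeil q n h := by
  have hself : modDefect q n h h = fakeWeil q n h := by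
    rw [modDefect_apply, EuclideanDomain.mod_self, ← fakeWeilₗ_apply (p := 0), map_zero,
      sub_zero]
  have hlead :
      modDefect q n h h = h.leadingCoeff • modDefect q n h (Polynomial.X ^ h.natDegree) := by
    conv_lhs => arg 2; rw [← h.eraseLead_add_C_mul_X_pow]
    rw [map_add, modDefect_of_degree_lt (h.degree_eraseLead_lt hh), zero_add,
      ← Polynomial.smul_eq_C_mul, map_smul]
  rw [← hself, hlead, smul_smul, inv_mul_cancel₀ (Polynomial.leadingCoeff_ne_zero.2 hh), one_smul]

end Descent

section Reduction

variable {k : Type*} [Field k] {q n : ℕ} {E : Finset (MvPolynomial (Fin n) k)}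

lemma fakeWeil_mul_monomial_mem_restrictTotalDegree {p : Polynomial k} {s M : ℕ}
    (hp : ∀ a ∈ p.support, (expVec q n a).degree + (expVec q n s).degree ≤ M) :
    fakeWeil q n p * monomial (expVec q n s) 1 ∈ restrictTotalDegree (Fin n) k M := by
  refine Polynomial.linearMap_mem_of_forall_mem_support
    (LinearMap.mulRight k (monomial (expVec q n s) (1 : k)) ∘ₗ fakeWeilₗ q n) _ fun a ha => ?_
  simp only [LinearMap.comp_apply, fakeWeilₗ_apply, LinearMap.mulRight_apply, fakeWeil_X_pow,
    monomial_mul, one_mul, mem_restrictTotalDegree]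
  exact (totalDegree_monomial_le_degree _ _).trans (by simpa using hp a ha)

lemma fakeWeil_mul_monomial_sub_fakeWeil_mul_X_pow_mem [NeZero n] (hq : 1 < q)
    (hE : ∀ i : Fin n, X i ^ q - X (i + 1) ∈ E) {p : Polynomial k} {s M : ℕ}
    (hp : ∀ a ∈ p.support, (expVec q n a).degree + (expVec q n s).degree ≤ M) :
    fakeWeil q n p * monomial (expVec q n s) 1 - fakeWeil q n (p * Polynomial.X ^ s)
      ∈ Vspace E M := by
  refine Polynomial.linearMap_mem_of_forall_mem_support
    (LinearMap.mulRight k (monomial (expVec q n s) (1 : k)) ∘ₗ fakeWeilₗ q n -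
      fakeWeilₗ q n ∘ₗ LinearMap.mulRight k (Polynomial.X ^ s)) _ fun a ha => ?_
  simp only [LinearMap.sub_apply, LinearMap.comp_apply, fakeWeilₗ_apply,
    LinearMap.mulRight_apply, ← pow_add, fakeWeil_X_pow]
  exact Vspace_mono (hp a ha) (monomial_expVec_mul_sub_mem hq hE a s)

/-- Since `X^{f+s} ≡ r_f X^s (mod h)` and `r_f` only involves exponents `a < deg h`. -/
lemma modDefect_X_pow_add_mem [NeZero n] (hq : 1 < q)
    (hE : ∀ i : Fin n, X i ^ q - X (i + 1) ∈ E) {h : Polynomial k} (hh : h ≠ 0) {M f s : ℕ}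
    (hf : modDefect q n h (Polynomial.X ^ f) ∈ Vspace E M)
    (hfs : (expVec q n f).degree + (expVec q n s).degree ≤ M)
    (hlow : ∀ a < h.natDegree, (expVec q n a).degree + (expVec q n s).degree ≤ M)
    (hshift : ∀ a < h.natDegree, modDefect q n h (Polynomial.X ^ (a + s)) ∈ Vspace E M) :
    modDefect q n h (Polynomial.X ^ (f + s)) ∈ Vspace E M := by
  set r := (Polynomial.X ^ f : Polynomial k) % h
  have hr : ∀ a ∈ r.support, a < h.natDegree :=
    fun a ha => Polynomial.lt_natDegree_of_mem_support_mod hh ha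
  have hmod : (Polynomial.X ^ (f + s) : Polynomial k) % h = r * Polynomial.X ^ s % h := by
    have hrr : r % h = r := (Polynomial.mod_eq_self_iff hh).2 (EuclideanDomain.mod_lt _ hh)
    rw [pow_add, Polynomial.mul_mod]
    conv_rhs => rw [Polynomial.mul_mod, hrr]
  set ms := monomial (expVec q n s) (1 : k)
  have hmul : fakeWeil q n (Polynomial.X ^ (f + s)) - fakeWeil q n (Polynomial.X ^ f) * ms
      ∈ Vspace E M := by
    rw [fakeWeil_X_pow, fakeWeil_X_pow, ← neg_sub]
    exact neg_mem (Vspace_mono hfs (monomial_expVec_mul_sub_mem hq hE f s))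
  have hf' : modDefect q n h (Polynomial.X ^ f) * ms ∈ Vspace E M := by
    refine mul_mem_Vspace hf ms ?_
    rw [modDefect_apply, sub_mul, ← mem_restrictTotalDegree]
    refine sub_mem ?_ (fakeWeil_mul_monomial_mem_restrictTotalDegree fun a ha =>
      hlow a (hr a ha))
    rw [fakeWeil_X_pow, monomial_mul, one_mul, mem_restrictTotalDegree]
    exact (totalDegree_monomial_le_degree _ _).trans (by simpa using hfs)
  have hr' := fakeWeil_mul_monomial_sub_fakeWeil_mul_X_pow_mem hq hE fun a ha => hlow a (hr a ha)
  have hshift' : modDefect q n h (r * Polynomial.X ^ s) ∈ Vspace E M :=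
    Polynomial.linearMap_mem_of_forall_mem_support
      (modDefect q n h ∘ₗ LinearMap.mulRight k (Polynomial.X ^ s)) _ fun a ha => by
        simpa [← pow_add] using hshift a (hr a ha)
  rw [modDefect_apply] at hf' hshift' ⊢
  rw [hmod]
  convert add_mem (add_mem (add_mem hmul hf') hr') hshift' using 1
  ring

end Reduction

section Main

variable {k : Type*} [Field k] {q n : ℕ} [NeZero n] {E : Finset (MvPolynomial (Fin n) k)}

lemma modDefect_X_pow_mem (hq : 1 < q) (hE : ∀ i : Fin n, X i ^ q - X (i + 1) ∈ E)
    {h : Polynomial k} (hh : h ≠ 0)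
    (hbar : fakeWeil q n h ∈ Vspace E ((q - 1) * (Nat.clog q h.natDegree + 1) + 1)) (e : ℕ) :
    modDefect q n h (Polynomial.X ^ e)
      ∈ Vspace E (max (wNat q e) ((q - 1) * (Nat.clog q h.natDegree + 1) + 1)) := by
  set c := Nat.clog q h.natDegree
  have hdc : h.natDegree ≤ q ^ c := Nat.le_pow_clog hq _
  have hu : (q - 1) * (c + 1) + 1 = (q - 1) * c + q := by rw [mul_add, mul_one]; omega
  have hlow : ∀ a < h.natDegree, wNat q a ≤ (q - 1) * c :=
    fun a ha => wNat_le_of_lt_pow hq (ha.trans_le hdc)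
  have hdeg := degree_expVec_le hq (NeZero.ne n)
  induction e using Nat.strong_induction_on with
  | _ e ih =>
  rcases lt_trichotomy e h.natDegree with he | rfl | he
  · rw [modDefect_of_degree_lt]
    · exact zero_mem _
    · rw [Polynomial.degree_X_pow, Polynomial.degree_eq_natDegree hh]
      exact_mod_cast he
  · rw [modDefect_X_pow_natDegree hh]
    exact Vspace_mono (le_max_right _ _) (Submodule.smul_mem _ _ hbar)
  obtain ⟨s, hs0, hsd, hw, hws⟩ := exists_wNat_split hq hdc he
  have hshift : ∀ a < h.natDegree, wNat q (a + s) ≤ (q - 1) * (c + 1) + 1 :=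
    fun a ha => (wNat_add_le hq a s).trans (by have := hlow a ha; omega)
  have hstep := modDefect_X_pow_add_mem (f := e - s) hq hE hh
    (Vspace_mono (by omega) (ih (e - s) (by omega)))
    ((Nat.add_le_add (hdeg _) (hdeg s)).trans hw)
    (fun a ha => (Nat.add_le_add (hdeg a) (hdeg s)).trans (by have := hlow a ha; omega))
    (fun a ha => Vspace_mono (by have := hshift a ha; omega) (ih (a + s) (by omega)))
  rwa [Nat.sub_add_cancel (by omega)] at hstep

end Main

theorem fakeWeil_pow_mod_mem_Vspace_general {k : Type*} [Field k] [DecidableEq k]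
    (q n : ℕ) (hq : IsPrimePow q) [NeZero n]
    (F : Finset (Polynomial k)) (h2 : Polynomial k)
    (d : ℕ) (hd : h2.natDegree = d) (hd0 : 0 < d)
    (hbar : fakeWeil q n h2 ∈
      Vspace (fakeWeilSystem q n F) ((q - 1) * (Nat.clog q d + 1) + 1)) :
    ∀ e : ℕ,
      (fakeWeil q n (Polynomial.X ^ e : Polynomial k) -
          fakeWeil q n ((Polynomial.X ^ e : Polynomial k) % h2) ∈
        Vspace (fakeWeilSystem q n F)
          (max (wNat q e) ((q - 1) * (Nat.clog q d + 1) + 1))) ∧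
      (wNat q e ≤ (q - 1) * (Nat.clog q d + 1) + 1 →
        fakeWeil q n (Polynomial.X ^ e : Polynomial k) -
            fakeWeil q n ((Polynomial.X ^ e : Polynomial k) % h2) ∈
          Vspace (fakeWeilSystem q n F) ((q - 1) * (Nat.clog q d + 1) + 1)) := by
  subst hd
  have hh : h2 ≠ 0 := by rintro rfl; simp at hd0
  have hE : ∀ i : Fin n, X i ^ q - X (i + 1) ∈ fakeWeilSystem q n F :=
    fun i => Finset.mem_union_right _ (Finset.mem_image_of_mem _ (Finset.mem_univ i))
  intro e
  have key := modDefect_X_pow_mem hq.one_lt hE hh hbar e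
  rw [modDefect_apply] at key
  exact ⟨key, fun hw => by rwa [max_eq_right hw] at key⟩

/-- If `overline{h_2} ∈ V_{E,u}` with `u = (q-1)⌈log_q d + 1⌉ + 1` and
`r_e = X^e mod h_2`, then `overline{X^e} - overline{r_e} ∈ V_{E, max(w(e), u)}` for all `e`;
in particular if `w(e) ≤ u` then `overline{X^e} - overline{r_e} ∈ V_{E,u}`. -/
theorem fakeWeil_pow_mod_mem_Vspace {k : Type*} [Field k] [Fintype k] [DecidableEq k]
    (q n : ℕ) (hq : IsPrimePow q) [NeZero n] (hcard : Fintype.card k = q ^ n)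
    (F : Finset (Polynomial k)) (h2 : Polynomial k)
    (d : ℕ) (hd : h2.natDegree = d) (hd0 : 0 < d)
    (hbar : fakeWeil q n h2 ∈
      Vspace (fakeWeilSystem q n F) ((q - 1) * (Nat.clog q d + 1) + 1)) :
    ∀ e : ℕ,
      (fakeWeil q n (Polynomial.X ^ e : Polynomial k) -
          fakeWeil q n ((Polynomial.X ^ e : Polynomial k) % h2) ∈
        Vspace (fakeWeilSystem q n F)
          (max (wNat q e) ((q - 1) * (Nat.clog q d + 1) + 1))) ∧
      (wNat q e ≤ (q - 1) * (Nat.clog q d + 1) + 1 →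
        fakeWeil q n (Polynomial.X ^ e : Polynomial k) -
            fakeWeil q n ((Polynomial.X ^ e : Polynomial k) % h2) ∈
          Vspace (fakeWeilSystem q n F) ((q - 1) * (Nat.clog q d + 1) + 1)) :=
  fakeWeil_pow_mod_mem_Vspace_general q n hq F h2 d hd hd0 hbar
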